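/- arXiv:2211.00571 — 5 statements merged into one kernel-verified Lean document; each statement's English description precedes it below -/
import Mathlib

section
/- Let R be a zero-sum-free and integral commutative semiring and G a group. Then a distribution p ∈ D_R(G) is invertible in the convolution monoid D_R(G) if and only if p is a delta distribution δ^g for some g ∈ G. In other words, the group of units of D_R(G) equals the image of δ_G : G → D_R(G). -/
open Finsupp

/-- `p` is a finitely supported `R`-distribution: its values sum to `1`. -/
def IsDist {R X : Type*} [CommSemiring R] (p : X →₀ R) : Prop :=
  p.sum (fun _ r => r) = 1

/-- Convolution: `(q ∗ p)(h) = ∑_{g₂·g₁ = h} q(g₂) p(g₁)`. -/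
noncomputable def dconv {R M : Type*} [CommSemiring R] [Monoid M]
    (q p : M →₀ R) : M →₀ R :=
  q.sum fun g₂ b => p.sum fun g₁ a => Finsupp.single (g₂ * g₁) (b * a)

lemma sum_eq_zero_forall {R ι : Type*} [AddCommMonoid R]
    (hzsf : ∀ a b : R, a + b = 0 → a = 0 ∧ b = 0)
    (s : Finset ι) (f : ι → R) (h : ∑ i ∈ s, f i = 0) : ∀ i ∈ s, f i = 0 := by
  classical
  induction s using Finset.cons_induction with
  | empty => simp
  | cons a s ha ih =>
    rw [Finset.sum_cons] at h
    obtain ⟨h1, h2⟩ := hzsf _ _ h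
    intro i hi
    rcases Finset.mem_cons.1 hi with rfl | hi
    · exact h1
    · exact ih h2 i hi

lemma dconv_apply' {R M : Type*} [CommSemiring R] [Monoid M] [DecidableEq M]
    (q p : M →₀ R) (h : M) :
    dconv q p h =
      ∑ g₂ ∈ q.support, ∑ g₁ ∈ p.support,
        (if g₂ * g₁ = h then q g₂ * p g₁ else 0) := by
  classical
  rw [dconv]
  simp only [Finsupp.sum, Finsupp.finset_sum_apply, Finsupp.single_apply]

lemma dconv_single {R M : Type*} [CommSemiring R] [Monoid M]
    (a c : M) (b d : R) :
    dconv (Finsupp.single a b) (Finsupp.single c d)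
      = Finsupp.single (a * c) (b * d) := by
  classical
  rw [dconv]
  rw [Finsupp.sum_single_index, Finsupp.sum_single_index]
  · simp
  · rw [Finsupp.sum_single_index] <;> simp

/-- Over a zero-sum-free, integral commutative semiring `R` and a group `G`, a
distribution `p ∈ D_R(G)` is invertible in the convolution monoid `D_R(G)` if and only
if it is a delta distribution: the units of `D_R(G)` are exactly the image of
`δ_G : G → D_R(G)`. -/
theorem units_of_group_dist {R G : Type*} [CommSemiring R] [Group G]
    (hzsf : ∀ a b : R, a + b = 0 → a = 0 ∧ b = 0)
    (hint : ∀ a b : R, a * b = 0 → a = 0 ∨ b = 0)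
    (p : G →₀ R) (hp : IsDist p) :
    (∃ q : G →₀ R, IsDist q ∧
        dconv p q = Finsupp.single 1 1 ∧ dconv q p = Finsupp.single 1 1) ↔
      ∃ g : G, p = Finsupp.single g 1 := by
  classical
  constructor
  · rintro ⟨q, hq, h1, -⟩
    by_cases htriv : (1 : R) = 0
    · refine ⟨1, ?_⟩
      ext x
      have : ∀ r : R, r = 0 := fun r => by
        calc r = r * 1 := (mul_one r).symm
        _ = r * 0 := by rw [htriv]
        _ = 0 := mul_zero r
      rw [this (p x), this (Finsupp.single 1 1 x)]
    -- p and q have nonempty support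
    have hpne : p.support.Nonempty := by
      rw [Finset.nonempty_iff_ne_empty]
      intro hemp
      have : p.sum (fun _ r => r) = 0 := by
        rw [Finsupp.sum, hemp, Finset.sum_empty]
      rw [hp] at this
      exact htriv this
    have hqne : q.support.Nonempty := by
      rw [Finset.nonempty_iff_ne_empty]
      intro hemp
      have : q.sum (fun _ r => r) = 0 := by
        rw [Finsupp.sum, hemp, Finset.sum_empty]
      rw [hq] at this
      exact htriv this
    obtain ⟨b, hb⟩ := hqne
    -- key: any a ∈ p.support, b ∈ q.support satisfies a * b = 1
    have key : ∀ a ∈ p.support, a * b = 1 := by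
      intro a ha
      by_contra hab
      have hzero : Finsupp.single (1 : G) (1 : R) (a * b) = 0 := by
        rw [Finsupp.single_apply, if_neg (fun h => hab h.symm)]
      rw [← h1, dconv_apply'] at hzero
      have h2 := sum_eq_zero_forall hzsf _ _ hzero a ha
      have h3 := sum_eq_zero_forall hzsf _ _ h2 b hb
      rw [if_pos rfl] at h3
      rcases hint _ _ h3 with h | h
      · exact (Finsupp.mem_support_iff.1 ha) h
      · exact (Finsupp.mem_support_iff.1 hb) h
    obtain ⟨a, ha⟩ := hpne
    refine ⟨a, ?_⟩
    have hsub : p.support ⊆ {a} := by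
      intro x hx
      have hxa : x = a := by
        have h1 := key a ha
        have h2 := key x hx
        rw [← h1] at h2
        exact mul_right_cancel h2
      simp [hxa]
    have hpa : p a = 1 := by
      have h := hp
      rw [IsDist, Finsupp.sum,
        Finset.sum_subset hsub (fun x _ hx => Finsupp.notMem_support_iff.1 hx)] at h
      simpa using h
    ext x
    rcases eq_or_ne x a with rfl | hx
    · rw [hpa, Finsupp.single_apply, if_pos rfl]
    · rw [Finsupp.single_apply, if_neg (Ne.symm hx)]
      exact Finsupp.notMem_support_iff.1 (fun h => hx (Finset.mem_singleton.1 (hsub h)))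
  · rintro ⟨g, rfl⟩
    refine ⟨Finsupp.single g⁻¹ 1, ?_, ?_, ?_⟩
    · (rw [IsDist, Finsupp.sum_single_index]; rfl)
    · rw [dconv_single]; simp
    · rw [dconv_single]; simp
end

section
/- Let R be a commutative semiring that is a division semiring and zero-sum-free. Given maps f₁ : X₁ → Y and f₂ : X₂ → Y of sets, the induced map D_R(X₁ ×_Y X₂) → D_R(X₁) ×_{D_R(Y)} D_R(X₂) is surjective: every pair (p₁, p₂) of distributions with equal pushforwards to D_R(Y) arises as the pair of marginals of a distribution on the fiber product X₁ ×_Y X₂. -/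
open Finsupp

lemma zsf_sum_eq_zero {R : Type*} [AddCommMonoid R]
    (hzsf : ∀ a b : R, a + b = 0 → a = 0 ∧ b = 0) {ι : Type*} (s : Finset ι) (g : ι → R)
    (h : ∑ i ∈ s, g i = 0) : ∀ i ∈ s, g i = 0 := by
  classical
  induction s using Finset.induction_on with
  | empty => simp
  | @insert a s ha ih =>
    rw [Finset.sum_insert ha] at h
    obtain ⟨h1, h2⟩ := hzsf _ _ h
    intro i hi
    rcases Finset.mem_insert.mp hi with rfl | hi
    · exact h1
    · exact ih h2 i hi

lemma mapDomain_apply'' {X Y R : Type*} [CommSemiring R] [DecidableEq Y]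
    (f : X → Y) (p : X →₀ R) (y : Y) :
    Finsupp.mapDomain f p y = ∑ x ∈ p.support, if f x = y then p x else 0 := by
  rw [Finsupp.mapDomain, Finsupp.sum_apply]
  refine Finset.sum_congr rfl fun a _ => ?_
  show (Finsupp.single (f a) (p a)) y = _
  rw [Finsupp.single_apply]

lemma coupling_marginal {R A Z : Type*} [CommSemiring R] [DecidableEq Z]
    (Pr : A → Prop) [DecidablePred Pr] (s : Finset A) (G : A → R)
    (hG : ∀ z : {a // Pr a}, (fun z : {a // Pr a} => G z.1) z ≠ 0 → z ∈ s.subtype Pr)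
    (π : {a // Pr a} → Z) (π' : A → Z) (hπ : ∀ z : {a // Pr a}, π z = π' z.1) (w : Z) :
    Finsupp.mapDomain π (Finsupp.onFinset (s.subtype Pr) (fun z => G z.1) hG) w
      = ∑ a ∈ s, if Pr a then (if π' a = w then G a else 0) else 0 := by
  classical
  rw [mapDomain_apply'']
  rw [Finset.sum_subset (Finsupp.support_onFinset_subset)]
  · calc (∑ x ∈ s.subtype Pr,
          if π x = w then (Finsupp.onFinset (s.subtype Pr) (fun z => G z.1) hG) x else 0)
        = ∑ x ∈ s.subtype Pr, (fun a => if π' a = w then G a else 0) x.1 := by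
          refine Finset.sum_congr rfl fun x _ => ?_
          rw [hπ]
          rfl
      _ = ∑ a ∈ s.filter Pr, (fun a => if π' a = w then G a else 0) a :=
          by exact Finset.sum_subtype_eq_sum_filter fun a => if π' a = w then G a else 0
      _ = ∑ a ∈ s, if Pr a then (if π' a = w then G a else 0) else 0 :=
          Finset.sum_filter _ _
  · intro x _ hx
    rw [Finsupp.notMem_support_iff.mp hx]
    simp

/-- Let `R` be a commutative division semiring (semifield) which is zero-sum-free.
Given `f₁ : X₁ → Y` and `f₂ : X₂ → Y`, the induced map
`D_R(X₁ ×_Y X₂) → D_R(X₁) ×_{D_R(Y)} D_R(X₂)` is surjective: any pair of distributions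
with equal pushforwards to `Y` arises as the marginals of a distribution on the fiber
product. -/
theorem fiberProduct_dist_surjective {R X₁ X₂ Y : Type*} [Semifield R]
    (hzsf : ∀ a b : R, a + b = 0 → a = 0 ∧ b = 0)
    (f₁ : X₁ → Y) (f₂ : X₂ → Y)
    (p₁ : X₁ →₀ R) (p₂ : X₂ →₀ R) (h₁ : IsDist p₁) (h₂ : IsDist p₂)
    (hcomp : Finsupp.mapDomain f₁ p₁ = Finsupp.mapDomain f₂ p₂) :
    ∃ p : {z : X₁ × X₂ // f₁ z.1 = f₂ z.2} →₀ R, IsDist p ∧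
      Finsupp.mapDomain (fun z => z.1.1) p = p₁ ∧
      Finsupp.mapDomain (fun z => z.1.2) p = p₂ := by
  classical
  set q : Y →₀ R := Finsupp.mapDomain f₁ p₁ with hq
  have hq₁ : ∀ x₁ : X₁, p₁ x₁ ≠ 0 → q (f₁ x₁) ≠ 0 := by
    intro x₁ hx₁ h0
    rw [hq, mapDomain_apply''] at h0
    have := zsf_sum_eq_zero hzsf _ _ h0 x₁ (Finsupp.mem_support_iff.mpr hx₁)
    simp at this
    exact hx₁ this
  have hq₂ : ∀ x₂ : X₂, p₂ x₂ ≠ 0 → q (f₂ x₂) ≠ 0 := by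
    intro x₂ hx₂ h0
    rw [hcomp, mapDomain_apply''] at h0
    have := zsf_sum_eq_zero hzsf _ _ h0 x₂ (Finsupp.mem_support_iff.mpr hx₂)
    simp at this
    exact hx₂ this
  set Pr : X₁ × X₂ → Prop := fun z => f₁ z.1 = f₂ z.2 with hPr
  set G : X₁ × X₂ → R := fun w => p₁ w.1 * p₂ w.2 / q (f₁ w.1) with hG
  have hsupp : ∀ z : {z : X₁ × X₂ // f₁ z.1 = f₂ z.2},
      (fun z : {z : X₁ × X₂ // f₁ z.1 = f₂ z.2} => G z.1) z ≠ 0 →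
      z ∈ (p₁.support ×ˢ p₂.support).subtype Pr := by
    intro z hz
    rw [Finset.mem_subtype, Finset.mem_product]
    refine ⟨Finsupp.mem_support_iff.mpr fun h0 => hz ?_, Finsupp.mem_support_iff.mpr fun h0 => hz ?_⟩
    · simp [hG, h0]
    · simp [hG, h0]
  set p : {z : X₁ × X₂ // f₁ z.1 = f₂ z.2} →₀ R :=
    Finsupp.onFinset ((p₁.support ×ˢ p₂.support).subtype Pr)
      (fun z => G z.1) hsupp with hp
  -- first marginal
  have hm1 : Finsupp.mapDomain (fun z : {z : X₁ × X₂ // f₁ z.1 = f₂ z.2} => z.1.1) p = p₁ := by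
    ext x₁
    rw [hp, coupling_marginal Pr _ G hsupp _ Prod.fst (fun _ => rfl) x₁, Finset.sum_product]
    by_cases hx₁ : p₁ x₁ = 0
    · rw [hx₁]
      refine Finset.sum_eq_zero fun a _ => Finset.sum_eq_zero fun b _ => ?_
      by_cases h : Pr (a, b)
      · rw [if_pos h]
        by_cases h' : a = x₁
        · subst h'; simp [hG, hx₁]
        · simp [h']
      · simp [h]
    · have key : ∀ a ∈ p₁.support,
          (∑ b ∈ p₂.support, if Pr (a, b) then (if (a, b).1 = x₁ then G (a, b) else 0) else 0)
          = if a = x₁ then p₁ x₁ else 0 := by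
        intro a _
        by_cases h' : a = x₁
        · subst h'
          rw [if_pos rfl]
          have step : (∑ b ∈ p₂.support,
                if Pr (a, b) then (if (a, b).1 = a then G (a, b) else 0) else 0)
              = ∑ b ∈ p₂.support, (if f₂ b = f₁ a then p₂ b else 0) * (p₁ a / q (f₁ a)) := by
            refine Finset.sum_congr rfl fun b _ => ?_
            by_cases h : Pr (a, b)
            · rw [if_pos h, if_pos rfl, if_pos ((show f₁ a = f₂ b from h).symm), hG]
              simp only
              rw [div_eq_mul_inv, div_eq_mul_inv]
              ring
            · rw [if_neg h, if_neg (fun hh => h hh.symm), zero_mul]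
          rw [step, ← Finset.sum_mul, ← mapDomain_apply'' f₂ p₂ (f₁ a), ← hcomp,
            mul_comm, div_mul_cancel₀ _ (hq₁ a hx₁)]
        · rw [if_neg h']
          refine Finset.sum_eq_zero fun b _ => ?_
          by_cases h : Pr (a, b) <;> simp [h, h']
      rw [Finset.sum_congr rfl key, Finset.sum_ite_eq' _ x₁,
        if_pos (Finsupp.mem_support_iff.mpr hx₁)]
  -- second marginal
  have hm2 : Finsupp.mapDomain (fun z : {z : X₁ × X₂ // f₁ z.1 = f₂ z.2} => z.1.2) p = p₂ := by
    ext x₂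
    rw [hp, coupling_marginal Pr _ G hsupp _ Prod.snd (fun _ => rfl) x₂, Finset.sum_product_right]
    by_cases hx₂ : p₂ x₂ = 0
    · rw [hx₂]
      refine Finset.sum_eq_zero fun b _ => Finset.sum_eq_zero fun a _ => ?_
      by_cases h : Pr (a, b)
      · rw [if_pos h]
        by_cases h' : b = x₂
        · subst h'; simp [hG, hx₂]
        · simp [h']
      · simp [h]
    · have key : ∀ b ∈ p₂.support,
          (∑ a ∈ p₁.support, if Pr (a, b) then (if (a, b).2 = x₂ then G (a, b) else 0) else 0)
          = if b = x₂ then p₂ x₂ else 0 := by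
        intro b _
        by_cases h' : b = x₂
        · subst h'
          rw [if_pos rfl]
          have step : (∑ a ∈ p₁.support,
                if Pr (a, b) then (if (a, b).2 = b then G (a, b) else 0) else 0)
              = ∑ a ∈ p₁.support, (if f₁ a = f₂ b then p₁ a else 0) * (p₂ b / q (f₂ b)) := by
            refine Finset.sum_congr rfl fun a _ => ?_
            by_cases h : Pr (a, b)
            · rw [if_pos h, if_pos rfl, if_pos (show f₁ a = f₂ b from h), hG]
              simp only
              rw [show f₁ (a, b).1 = f₂ b from h]
              rw [div_eq_mul_inv, div_eq_mul_inv]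
              ring
            · rw [if_neg h, if_neg h, zero_mul]
          rw [step, ← Finset.sum_mul, ← mapDomain_apply'' f₁ p₁ (f₂ b), ← hq,
            mul_comm, div_mul_cancel₀ _ (hq₂ b hx₂)]
        · rw [if_neg h']
          refine Finset.sum_eq_zero fun a _ => ?_
          by_cases h : Pr (a, b) <;> simp [h, h']
      rw [Finset.sum_congr rfl key, Finset.sum_ite_eq' _ x₂,
        if_pos (Finsupp.mem_support_iff.mpr hx₂)]
  refine ⟨p, ?_, hm1, hm2⟩
  rw [IsDist]
  have : (Finsupp.mapDomain (fun z : {z : X₁ × X₂ // f₁ z.1 = f₂ z.2} => z.1.1) p).sum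
      (fun _ r => r) = p.sum (fun _ r => r) :=
    Finsupp.sum_mapDomain_index (fun _ => rfl) (fun _ _ _ => rfl)
  rw [← this, hm1]
  exact h₁
end

section
/- Let R be a zero-sum-free integral commutative semiring, M an R-convex monoid, n ∈ M invertible, and m ∈ M. Then the following are equivalent: (1) m is strongly non-invertible (Isupp(m) = ∅); (2) n·m is strongly non-invertible; (3) m·n is strongly non-invertible. -/
open Finsupp

/-- The invertible support of `m`. -/
def Isupp {R M : Type*} [CommSemiring R] [Monoid M]
    (pm : (M →₀ R) → M) (m : M) : Set M :=
  {m' | IsUnit m' ∧ ∃ P : M →₀ R, IsDist P ∧ pm P = m ∧ P m' ≠ 0}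

lemma isDist_single {R X : Type*} [CommSemiring R] (x : X) : IsDist (Finsupp.single x (1:R)) := by
  simp [IsDist, Finsupp.sum_single_index]

lemma isDist_mapDomain {R X Y : Type*} [CommSemiring R] (f : X → Y) (p : X →₀ R)
    (hp : IsDist p) : IsDist (Finsupp.mapDomain f p) := by
  unfold IsDist at *
  rw [Finsupp.sum_mapDomain_index (by simp) (by simp)]
  exact hp

lemma dconv_single_left {R M : Type*} [CommSemiring R] [Monoid M] (c : M) (p : M →₀ R) :
    dconv (Finsupp.single c 1) p = Finsupp.mapDomain (fun x => c * x) p := by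
  unfold dconv
  rw [Finsupp.sum_single_index (by simp)]
  simp [Finsupp.mapDomain]

lemma dconv_single_right {R M : Type*} [CommSemiring R] [Monoid M] (c : M) (p : M →₀ R) :
    dconv p (Finsupp.single c 1) = Finsupp.mapDomain (fun x => x * c) p := by
  unfold dconv
  rw [Finsupp.mapDomain]
  apply Finsupp.sum_congr
  intro g₂ _
  rw [Finsupp.sum_single_index (by simp)]
  simp

lemma Isupp_mul_left {R M : Type*} [CommSemiring R] [Monoid M]
    (pm : (M →₀ R) → M)
    (hδ : ∀ m : M, pm (Finsupp.single m 1) = m)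
    (hmul : ∀ p q : M →₀ R, IsDist p → IsDist q → pm (dconv q p) = pm q * pm p)
    (c : Mˣ) (m m' : M) (h : m' ∈ Isupp pm m) : ((c : M) * m') ∈ Isupp pm ((c : M) * m) := by
  obtain ⟨hu, P, hP, hPm, hPm'⟩ := h
  refine ⟨(Units.isUnit c).mul hu, Finsupp.mapDomain (fun x => (c : M) * x) P,
    isDist_mapDomain _ _ hP, ?_, ?_⟩
  · rw [← dconv_single_left, hmul P _ hP (isDist_single (c : M)), hδ, hPm]
  · rw [Finsupp.mapDomain_apply (fun x y hxy => by simpa using hxy : Function.Injective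
      (fun x => (c : M) * x))]
    exact hPm'

lemma Isupp_mul_right {R M : Type*} [CommSemiring R] [Monoid M]
    (pm : (M →₀ R) → M)
    (hδ : ∀ m : M, pm (Finsupp.single m 1) = m)
    (hmul : ∀ p q : M →₀ R, IsDist p → IsDist q → pm (dconv q p) = pm q * pm p)
    (c : Mˣ) (m m' : M) (h : m' ∈ Isupp pm m) : (m' * (c : M)) ∈ Isupp pm (m * (c : M)) := by
  obtain ⟨hu, P, hP, hPm, hPm'⟩ := h
  refine ⟨hu.mul (Units.isUnit c), Finsupp.mapDomain (fun x => x * (c : M)) P,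
    isDist_mapDomain _ _ hP, ?_, ?_⟩
  · rw [← dconv_single_right, hmul _ P (isDist_single (c : M)) hP, hδ, hPm]
  · rw [Finsupp.mapDomain_apply (fun x y hxy => by simpa using hxy : Function.Injective
      (fun x => x * (c : M)))]
    exact hPm'

/-- In an `R`-convex monoid over a zero-sum-free integral commutative semiring, for an
invertible `n`, the following are equivalent: `m` is strongly non-invertible, `n·m` is
strongly non-invertible, and `m·n` is strongly non-invertible. -/
theorem stronglyNonInvertible_mul_unit {R M : Type*} [CommSemiring R] [Monoid M]
    (hzsf : ∀ a b : R, a + b = 0 → a = 0 ∧ b = 0)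
    (hint : ∀ a b : R, a * b = 0 → a = 0 ∨ b = 0)
    (pm : (M →₀ R) → M)
    (hδ : ∀ m : M, pm (Finsupp.single m 1) = m)
    (hμ : ∀ Q : (M →₀ R) →₀ R, IsDist Q → (∀ p ∈ Q.support, IsDist p) →
      pm (Q.sum fun p r => r • p) = pm (Finsupp.mapDomain pm Q))
    (hmul : ∀ p q : M →₀ R, IsDist p → IsDist q → pm (dconv q p) = pm q * pm p)
    (n m : M) (hn : IsUnit n) :
    (Isupp pm m = ∅ ↔ Isupp pm (n * m) = ∅) ∧
    (Isupp pm m = ∅ ↔ Isupp pm (m * n) = ∅) := by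
  obtain ⟨u, rfl⟩ := hn
  constructor
  · constructor
    · intro h
      rw [Set.eq_empty_iff_forall_notMem] at h ⊢
      intro x hx
      have := Isupp_mul_left pm hδ hmul u⁻¹ _ _ hx
      rw [← mul_assoc] at this
      simp only [Units.inv_mul, one_mul] at this
      exact h _ this
    · intro h
      rw [Set.eq_empty_iff_forall_notMem] at h ⊢
      intro x hx
      exact h _ (Isupp_mul_left pm hδ hmul u _ _ hx)
  · constructor
    · intro h
      rw [Set.eq_empty_iff_forall_notMem] at h ⊢
      intro x hx
      have := Isupp_mul_right pm hδ hmul u⁻¹ _ _ hx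
      rw [mul_assoc] at this
      simp only [Units.mul_inv, mul_one] at this
      exact h _ this
    · intro h
      rw [Set.eq_empty_iff_forall_notMem] at h ⊢
      intro x hx
      exact h _ (Isupp_mul_right pm hδ hmul u _ _ hx)
end

section
/- Let R be a zero-sum-free commutative semiring and f : M₁ → M₂ a morphism of R-convex monoids. If f(m) is strongly non-invertible, then m is strongly non-invertible. More generally, if Isupp(f(m)) ∩ f(M₁*) = ∅, then m is strongly non-invertible. -/
open Finsupp

lemma sum_eq_zero_of_zsf' {R : Type*} [CommSemiring R]
    (hzsf : ∀ a b : R, a + b = 0 → a = 0 ∧ b = 0)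
    {ι : Type*} (s : Finset ι) (g : ι → R) (h : ∑ i ∈ s, g i = 0) :
    ∀ i ∈ s, g i = 0 := by
  induction s using Finset.cons_induction with
  | empty => simp
  | cons a s ha ih =>
    rw [Finset.sum_cons] at h
    obtain ⟨h1, h2⟩ := hzsf _ _ h
    intro i hi
    rcases Finset.mem_cons.mp hi with rfl | hi
    · exact h1
    · exact ih h2 i hi

/-- For a morphism `f : M₁ → M₂` of `R`-convex monoids over a zero-sum-free commutative
semiring: if `Isupp(f(m)) ∩ f(M₁*) = ∅` then `m` is strongly non-invertible; in
particular if `f(m)` is strongly non-invertible then so is `m`. -/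
theorem stronglyNonInvertible_pullback {R M₁ M₂ : Type*} [CommSemiring R] [Monoid M₁] [Monoid M₂]
    (hzsf : ∀ a b : R, a + b = 0 → a = 0 ∧ b = 0)
    (pm₁ : (M₁ →₀ R) → M₁) (pm₂ : (M₂ →₀ R) → M₂)
    (hδ₁ : ∀ m : M₁, pm₁ (Finsupp.single m 1) = m)
    (hμ₁ : ∀ Q : (M₁ →₀ R) →₀ R, IsDist Q → (∀ p ∈ Q.support, IsDist p) →
      pm₁ (Q.sum fun p r => r • p) = pm₁ (Finsupp.mapDomain pm₁ Q))
    (hmul₁ : ∀ p q : M₁ →₀ R, IsDist p → IsDist q → pm₁ (dconv q p) = pm₁ q * pm₁ p)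
    (hδ₂ : ∀ m : M₂, pm₂ (Finsupp.single m 1) = m)
    (hμ₂ : ∀ Q : (M₂ →₀ R) →₀ R, IsDist Q → (∀ p ∈ Q.support, IsDist p) →
      pm₂ (Q.sum fun p r => r • p) = pm₂ (Finsupp.mapDomain pm₂ Q))
    (hmul₂ : ∀ p q : M₂ →₀ R, IsDist p → IsDist q → pm₂ (dconv q p) = pm₂ q * pm₂ p)
    (f : M₁ →* M₂)
    (hf : ∀ p : M₁ →₀ R, IsDist p → pm₂ (Finsupp.mapDomain (⇑f) p) = f (pm₁ p))
    (m : M₁) :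
    (Isupp pm₂ (f m) ∩ (⇑f) '' {x : M₁ | IsUnit x} = ∅ → Isupp pm₁ m = ∅) ∧
    (Isupp pm₂ (f m) = ∅ → Isupp pm₁ m = ∅) := by
  have main : Isupp pm₂ (f m) ∩ (⇑f) '' {x : M₁ | IsUnit x} = ∅ → Isupp pm₁ m = ∅ := by
    classical
    intro hempty
    rw [Set.eq_empty_iff_forall_notMem] at hempty ⊢
    rintro m' ⟨hu, P, hP, hpm, hne⟩
    apply hempty (f m')
    have key : Finsupp.mapDomain (⇑f) P (f m') =
        ∑ x ∈ P.support, if f x = f m' then P x else 0 := by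
      rw [Finsupp.mapDomain, Finsupp.sum_apply]
      simp [Finsupp.sum, Finsupp.single_apply]
    refine ⟨⟨hu.map f, Finsupp.mapDomain (⇑f) P, ?_, by rw [hf P hP, hpm], ?_⟩, m', hu, rfl⟩
    · unfold IsDist at hP ⊢
      rw [Finsupp.sum_mapDomain_index (fun _ => rfl) (fun _ _ _ => rfl)]
      exact hP
    · intro h0
      have := sum_eq_zero_of_zsf' hzsf _ _ (key ▸ h0) m'
        (Finsupp.mem_support_iff.mpr hne)
      simp at this
      exact hne this
  exact ⟨main, fun h => main (by rw [h]; simp)⟩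
end

section
/- Let R be a zero-sum-free integral commutative semiring and X a convex set over R (a D_R-algebra with structure map π^X : D_R(X) → X), where a point x ∈ X is called a vertex if x has a unique preimage under π^X. Then for a morphism of R-convex sets f : X → Y and a vertex y ∈ Y, every vertex of the R-convex subset f⁻¹(y) is a vertex of X. -/
open Finsupp

lemma zsf_finset_sum {R α : Type*} [CommSemiring R]
    (hzsf : ∀ a b : R, a + b = 0 → a = 0 ∧ b = 0) (s : Finset α) (g : α → R)
    (h : ∑ i ∈ s, g i = 0) : ∀ i ∈ s, g i = 0 := by
  induction s using Finset.cons_induction with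
  | empty => simp
  | cons a s ha ih =>
    rw [Finset.sum_cons] at h
    obtain ⟨h1, h2⟩ := hzsf _ _ h
    intro i hi
    rcases Finset.mem_cons.1 hi with rfl | hi
    · exact h1
    · exact ih h2 i hi

/-- Let `R` be a zero-sum-free integral commutative semiring, `X`, `Y` `R`-convex sets
and `f : X → Y` a morphism of `R`-convex sets. If `y ∈ Y` is a vertex (its only
preimage under the structure map is `δ^y`), then every vertex `z` of the `R`-convex
subset `f⁻¹(y)` (i.e. every distribution supported on `f⁻¹(y)` mapping to `z` is
`δ^z`) is a vertex of `X`. -/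
theorem vertex_of_fiber_vertex {R X Y : Type*} [CommSemiring R]
    (hzsf : ∀ a b : R, a + b = 0 → a = 0 ∧ b = 0)
    (hint : ∀ a b : R, a * b = 0 → a = 0 ∨ b = 0)
    (pX : (X →₀ R) → X) (pY : (Y →₀ R) → Y)
    (hδX : ∀ x : X, pX (Finsupp.single x 1) = x)
    (hμX : ∀ Q : (X →₀ R) →₀ R, IsDist Q → (∀ p ∈ Q.support, IsDist p) →
      pX (Q.sum fun p r => r • p) = pX (Finsupp.mapDomain pX Q))
    (hδY : ∀ y : Y, pY (Finsupp.single y 1) = y)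
    (hμY : ∀ Q : (Y →₀ R) →₀ R, IsDist Q → (∀ p ∈ Q.support, IsDist p) →
      pY (Q.sum fun p r => r • p) = pY (Finsupp.mapDomain pY Q))
    (f : X → Y)
    (hf : ∀ p : X →₀ R, IsDist p → pY (Finsupp.mapDomain f p) = f (pX p))
    (y : Y)
    (hy : ∀ q : Y →₀ R, IsDist q → pY q = y → q = Finsupp.single y 1)
    (z : X) (hz : f z = y)
    (hzv : ∀ p : X →₀ R, IsDist p → (∀ a ∈ p.support, f a = y) → pX p = z →
      p = Finsupp.single z 1) :
    ∀ p : X →₀ R, IsDist p → pX p = z → p = Finsupp.single z 1 := by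
  classical
  intro p hp hpz
  have hqd : IsDist (Finsupp.mapDomain f p) := by
    unfold IsDist at hp ⊢
    rw [Finsupp.sum_mapDomain_index (by simp) (by simp), hp]
  have hq : Finsupp.mapDomain f p = Finsupp.single y 1 := by
    apply hy _ hqd
    rw [hf p hp, hpz, hz]
  have hsupp : ∀ a ∈ p.support, f a = y := by
    intro a ha
    by_contra hfa
    have h0 : (Finsupp.mapDomain f p) (f a) = 0 := by
      rw [hq, Finsupp.single_apply, if_neg (fun h => hfa h.symm)]
    rw [Finsupp.mapDomain, Finsupp.sum_apply] at h0
    have h0' : ∑ x ∈ p.support, (Finsupp.single (f x) (p x)) (f a) = 0 := h0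
    have := zsf_finset_sum hzsf _ _ h0' a ha
    rw [Finsupp.single_apply, if_pos rfl] at this
    exact (Finsupp.mem_support_iff.1 ha) this
  exact hzv p hp hsupp hpz
end
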